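/- arXiv:0912.1733 — 3 statements merged into one kernel-verified Lean document; each statement's English description precedes it below -/
import Mathlib

section
/- Let V : ℝ^d → ℝ be smooth and suppose there is a constant C₀ such that |Δ V(x)|² ≤ C₀(|∇V(x)|² + 1) for all x. Then there exists a constant C such that for all smooth compactly supported g : ℝ^d → ℝ, ∫ |（(1/2)∇V − ∇)g|² dx ≤ C ∫ (|((1/2)∇V + ∇)g|² + |g|²) dx. -/
open MeasureTheory Real

/-- Partial derivative `∂_i f` on `ℝ^d`. -/
noncomputable def pd {d : ℕ} (f : (Fin d → ℝ) → ℝ) (i : Fin d) (x : Fin d → ℝ) : ℝ :=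
  fderiv ℝ f x (Pi.single i 1)

lemma contDiff_pd {d : ℕ} {f : (Fin d → ℝ) → ℝ} (hf : ContDiff ℝ (⊤ : ℕ∞) f) (i : Fin d) :
    ContDiff ℝ (⊤ : ℕ∞) (pd f i) := by
  unfold pd
  exact (hf.fderiv_right (by simp)).clm_apply contDiff_const

lemma hcs_pd {d : ℕ} {f : (Fin d → ℝ) → ℝ} (hf : HasCompactSupport f) (i : Fin d) :
    HasCompactSupport (pd f i) := by
  have : pd f i = (fun L : (Fin d → ℝ) →L[ℝ] ℝ => L (Pi.single i 1)) ∘ (fderiv ℝ f) := rfl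
  rw [this]
  exact (hf.fderiv ℝ).comp_left (by simp)

lemma hcs_sub {d : ℕ} {f h : (Fin d → ℝ) → ℝ} (hf : HasCompactSupport f)
    (hh : HasCompactSupport h) : HasCompactSupport (fun x => f x - h x) :=
  hf.comp₂_left hh (sub_zero 0)

lemma hcs_add {d : ℕ} {f h : (Fin d → ℝ) → ℝ} (hf : HasCompactSupport f)
    (hh : HasCompactSupport h) : HasCompactSupport (fun x => f x + h x) :=
  hf.comp₂_left hh (add_zero 0)

lemma pd_mul_self {d : ℕ} {g : (Fin d → ℝ) → ℝ} (hg : ContDiff ℝ (⊤ : ℕ∞) g) (i : Fin d)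
    (x : Fin d → ℝ) : pd (fun y => g y * g y) i x = 2 * (g x * pd g i x) := by
  unfold pd
  rw [fderiv_fun_mul (hg.differentiable (by simp) x) (hg.differentiable (by simp) x)]
  simp; ring

lemma intble {d : ℕ} {f : (Fin d → ℝ) → ℝ} (hf : Continuous f) (h : HasCompactSupport f) :
    Integrable f := hf.integrable_of_hasCompactSupport h

lemma sq_hcs {d : ℕ} {f : (Fin d → ℝ) → ℝ} (hf : HasCompactSupport f) :
    HasCompactSupport (fun x => f x ^ 2) := by
  simp_rw [pow_two]; exact hf.mul_left

lemma ibp {d : ℕ} (V g : (Fin d → ℝ) → ℝ) (hV : ContDiff ℝ (⊤ : ℕ∞) V) (hg : ContDiff ℝ (⊤ : ℕ∞) g)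
    (hgc : HasCompactSupport g) (i : Fin d) :
    ∫ x, pd V i x * (g x * pd g i x) = -(1/2) * ∫ x, pd (pd V i) i x * g x ^ 2 := by
  have hgg : ContDiff ℝ (⊤ : ℕ∞) (fun y => g y * g y) := hg.mul hg
  have hggc : HasCompactSupport (fun y => g y * g y) := hgc.mul_left
  have h1 : Integrable (fun x => pd (pd V i) i x * (g x * g x)) :=
    intble (((contDiff_pd (contDiff_pd hV i) i).continuous).mul (hg.continuous.mul hg.continuous))
      (hggc.mul_left)
  have h2 : Integrable (fun x => pd V i x * pd (fun y => g y * g y) i x) :=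
    intble ((contDiff_pd hV i).continuous.mul (contDiff_pd hgg i).continuous)
      ((hcs_pd hggc i).mul_left)
  have h3 : Integrable (fun x => pd V i x * (g x * g x)) :=
    intble ((contDiff_pd hV i).continuous.mul (hg.continuous.mul hg.continuous)) (hggc.mul_left)
  have e : ∀ x, pd V i x * pd (fun y => g y * g y) i x = 2 * (pd V i x * (g x * pd g i x)) := by
    intro x; rw [pd_mul_self hg i x]; ring
  have key : ∫ x, 2 * (pd V i x * (g x * pd g i x)) = - ∫ x, pd (pd V i) i x * (g x * g x) := by
    calc ∫ x, 2 * (pd V i x * (g x * pd g i x))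
        = ∫ x, pd V i x * pd (fun y => g y * g y) i x := by simp_rw [e]
      _ = - ∫ x, pd (pd V i) i x * (g x * g x) :=
        integral_mul_fderiv_eq_neg_fderiv_mul_of_integrable
          (f := pd V i) (g := fun y => g y * g y) (v := Pi.single i 1)
          (by exact h1) (by exact h2) h3
          (fun x _ => (contDiff_pd hV i).differentiable (by simp) x) (fun x _ => hgg.differentiable (by simp) x)
  rw [integral_const_mul] at key
  have e2 : (fun x => pd (pd V i) i x * (g x * g x)) = fun x => pd (pd V i) i x * g x ^ 2 := by
    funext x; ring
  rw [e2] at key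
  linarith [key]

set_option maxHeartbeats 2000000 in
/-- If `|ΔV|² ≤ C₀(|∇V|² + 1)`, then `‖X* g‖² ≤ C(‖X g‖² + ‖g‖²)`,
where `X g = (1/2)(∇V) g + ∇ g` and `X* g = (1/2)(∇V) g − ∇ g`. -/
theorem stmt0 {d : ℕ} (V : (Fin d → ℝ) → ℝ) (hV : ContDiff ℝ (⊤ : ℕ∞) V) (C₀ : ℝ)
    (hΔ : ∀ x, (∑ i, pd (pd V i) i x) ^ 2 ≤ C₀ * ((∑ i, (pd V i x) ^ 2) + 1)) :
    ∃ C : ℝ, ∀ g : (Fin d → ℝ) → ℝ, ContDiff ℝ (⊤ : ℕ∞) g → HasCompactSupport g →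
      (∫ x, ∑ i, ((1 / 2) * pd V i x * g x - pd g i x) ^ 2) ≤
        C * ∫ x, ((∑ i, ((1 / 2) * pd V i x * g x + pd g i x) ^ 2) + (g x) ^ 2) := by
  have hC₀ : 0 ≤ C₀ := by
    have h := hΔ 0
    have hs : (0:ℝ) ≤ ∑ i, (pd V i (0 : Fin d → ℝ)) ^ 2 :=
      Finset.sum_nonneg fun i _ => sq_nonneg _
    nlinarith [sq_nonneg (∑ i, pd (pd V i) i (0 : Fin d → ℝ))]
  set ε : ℝ := 1 / (4 * (C₀ + 1)) with hεdef
  have hεpos : 0 < ε := by positivity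
  set c : ℝ := ε * C₀ + (C₀ + 1) with hcdef
  have hc0 : 0 ≤ c := by rw [hcdef]; positivity
  have hε4 : ε * (C₀ + 1) = 1/4 := by
    rw [hεdef]; field_simp
  have hεC₀ : 4 * ε * C₀ ≤ 1 := by nlinarith [hε4, hεpos.le]
  refine ⟨3 + 2 * c, fun g hg hgc => ?_⟩
  have cV : ∀ i, Continuous (pd V i) := fun i => (contDiff_pd hV i).continuous
  have cVV : ∀ i, Continuous (pd (pd V i) i) :=
    fun i => (contDiff_pd (contDiff_pd hV i) i).continuous
  have cg : Continuous g := hg.continuous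
  have cpg : ∀ i, Continuous (pd g i) := fun i => (contDiff_pd hg i).continuous
  have hcspg : ∀ i, HasCompactSupport (pd g i) := fun i => hcs_pd hgc i
  have iX : ∀ i : Fin d, Integrable (fun x => ((1/2) * pd V i x * g x + pd g i x) ^ 2) := by
    intro i
    exact intble (by fun_prop) (sq_hcs (hcs_add hgc.mul_left (hcspg i)))
  have iA : ∀ i : Fin d, Integrable (fun x => ((1/2) * pd V i x * g x) ^ 2) := by
    intro i
    exact intble (by fun_prop) (sq_hcs hgc.mul_left)
  have iP : ∀ i : Fin d, Integrable (fun x => pd V i x * (g x * pd g i x)) := by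
    intro i
    exact intble (by fun_prop) (((hcspg i).mul_left).mul_left)
  have iQ : ∀ i : Fin d, Integrable (fun x => pd (pd V i) i x * g x ^ 2) := by
    intro i
    exact intble (by fun_prop) ((sq_hcs hgc).mul_left)
  have ig2 : Integrable (fun x => g x ^ 2) := intble (by fun_prop) (sq_hcs hgc)
  have iXs : Integrable (fun x => ∑ i, ((1/2) * pd V i x * g x + pd g i x) ^ 2) :=
    integrable_finset_sum _ fun i _ => iX i
  have iAs : Integrable (fun x => ∑ i, ((1/2) * pd V i x * g x) ^ 2) :=
    integrable_finset_sum _ fun i _ => iA i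
  have iPs : Integrable (fun x => ∑ i, pd V i x * (g x * pd g i x)) :=
    integrable_finset_sum _ fun i _ => iP i
  have iDabs : Integrable (fun x => |∑ i, pd (pd V i) i x| * g x ^ 2) := by
    refine intble (by fun_prop) ((sq_hcs hgc).mul_left)
  set X : ℝ := ∫ x, ∑ i, ((1/2) * pd V i x * g x + pd g i x) ^ 2 with hXdef
  set G : ℝ := ∫ x, g x ^ 2 with hGdef
  set T : ℝ := ∫ x, (∑ i, pd (pd V i) i x) * g x ^ 2 with hTdef
  set A : ℝ := ∫ x, ∑ i, ((1/2) * pd V i x * g x) ^ 2 with hAdef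
  set B : ℝ := ∫ x, |∑ i, pd (pd V i) i x| * g x ^ 2 with hBdef
  have hPT : (∫ x, ∑ i, pd V i x * (g x * pd g i x)) = -(1/2) * T := by
    rw [integral_finset_sum _ fun i _ => iP i]
    have h : ∀ i ∈ Finset.univ, (∫ x, pd V i x * (g x * pd g i x)) =
        -(1/2) * ∫ x, pd (pd V i) i x * g x ^ 2 := fun i _ => ibp V g hV hg hgc i
    rw [Finset.sum_congr rfl h, ← Finset.mul_sum]
    congr 1
    rw [hTdef, ← integral_finset_sum _ fun i _ => iQ i]
    congr 1; funext x; rw [Finset.sum_mul]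
  have hS : (∫ x, ∑ i, ((1/2) * pd V i x * g x - pd g i x) ^ 2) = X + T := by
    have hpt : ∀ x, (∑ i, ((1/2) * pd V i x * g x - pd g i x) ^ 2) =
        (∑ i, ((1/2) * pd V i x * g x + pd g i x) ^ 2)
          - 2 * ∑ i, pd V i x * (g x * pd g i x) := by
      intro x
      rw [Finset.mul_sum, ← Finset.sum_sub_distrib]
      exact Finset.sum_congr rfl fun i _ => by ring
    calc (∫ x, ∑ i, ((1/2) * pd V i x * g x - pd g i x) ^ 2)
        = ∫ x, ((∑ i, ((1/2) * pd V i x * g x + pd g i x) ^ 2)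
            - 2 * ∑ i, pd V i x * (g x * pd g i x)) := by simp_rw [hpt]
      _ = X - 2 * ∫ x, ∑ i, pd V i x * (g x * pd g i x) := by
          rw [integral_sub iXs (iPs.const_mul 2)]
          rw [integral_const_mul]
      _ = X + T := by rw [hPT]; ring
  have hA : A ≤ X + (1/2) * T := by
    have hpt : ∀ x, (∑ i, ((1/2) * pd V i x * g x) ^ 2) ≤
        (∑ i, ((1/2) * pd V i x * g x + pd g i x) ^ 2)
          - ∑ i, pd V i x * (g x * pd g i x) := by
      intro x
      rw [← Finset.sum_sub_distrib]
      exact Finset.sum_le_sum fun i _ => by nlinarith [sq_nonneg (pd g i x)]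
    have h2 := integral_mono iAs (iXs.sub iPs) hpt
    rw [Pi.sub_def] at h2
    rw [integral_sub iXs iPs, hPT] at h2
    rw [hAdef]; linarith
  have hTB : |T| ≤ B := by
    rw [hTdef, hBdef]
    have h1 := norm_integral_le_integral_norm (μ := volume)
      (fun x => (∑ i, pd (pd V i) i x) * g x ^ 2)
    simp only [Real.norm_eq_abs] at h1
    refine le_trans h1 (le_of_eq ?_)
    congr 1; funext x; rw [abs_mul, abs_pow, sq_abs]
  have hB : B ≤ 4 * ε * C₀ * A + c * G := by
    have hpt : ∀ x, |∑ i, pd (pd V i) i x| * g x ^ 2 ≤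
        4 * ε * C₀ * (∑ i, ((1/2) * pd V i x * g x) ^ 2) + c * g x ^ 2 := by
      intro x
      set D := ∑ i, pd (pd V i) i x with hD
      have h1 : |D| ≤ ε * D ^ 2 + (C₀ + 1) := by
        rw [← mul_le_mul_iff_right₀ hεpos]
        have hsq : ε ^ 2 * |D| ^ 2 = ε ^ 2 * D ^ 2 := by rw [sq_abs]
        nlinarith [sq_nonneg (ε * |D| - 1/2), hε4, hsq]
      have hAq : 4 * (∑ i, ((1/2) * pd V i x * g x) ^ 2)
          = (∑ i, (pd V i x) ^ 2) * g x ^ 2 := by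
        rw [Finset.mul_sum, Finset.sum_mul]
        exact Finset.sum_congr rfl fun i _ => by ring
      have p1 := mul_le_mul_of_nonneg_right h1 (sq_nonneg (g x))
      have p2 := mul_le_mul_of_nonneg_right (hΔ x) (sq_nonneg (g x))
      have p3 := mul_le_mul_of_nonneg_left p2 hεpos.le
      rw [hcdef]
      nlinarith [sq_nonneg (g x), sq_nonneg D]
    have h2 := integral_mono iDabs ((iAs.const_mul _).add (ig2.const_mul c)) hpt
    rw [Pi.add_def] at h2
    rwa [integral_add (iAs.const_mul _) (ig2.const_mul c), integral_const_mul,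
      integral_const_mul] at h2
  have hA0 : 0 ≤ A := by
    rw [hAdef]
    exact integral_nonneg fun x => Finset.sum_nonneg fun i _ => sq_nonneg _
  have hX0 : 0 ≤ X := by
    rw [hXdef]
    exact integral_nonneg fun x => Finset.sum_nonneg fun i _ => sq_nonneg _
  have hG0 : 0 ≤ G := by
    rw [hGdef]; exact integral_nonneg fun x => sq_nonneg _
  have hT1 : T ≤ B := le_trans (le_abs_self T) hTB
  have hRHS : (∫ x, ((∑ i, ((1/2) * pd V i x * g x + pd g i x) ^ 2) + g x ^ 2)) = X + G := by
    rw [integral_add iXs ig2]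
  clear_value ε c X G T A B
  have final : X + T ≤ (3 + 2 * c) * (X + G) := by
    clear hXdef hGdef hTdef hAdef hBdef hεdef hcdef hε4 hS hRHS hPT hΔ
    clear iX iA iP iQ ig2 iXs iAs iPs iDabs cV cVV cg cpg hcspg hV hg hgc
    have step1 : (0:ℝ) ≤ (1 - 4 * ε * C₀) * A := mul_nonneg (by linarith) hA0
    have step : B ≤ A + c * G := by nlinarith [hB]
    have hBfin : B ≤ 2 * X + 2 * c * G := by linarith [hA, step, hT1]
    nlinarith [hT1, hBfin, hX0, hG0, mul_nonneg hc0 hX0, mul_nonneg hc0 hG0]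
  calc (∫ x, ∑ i, ((1/2) * pd V i x * g x - pd g i x) ^ 2) = X + T := hS
    _ ≤ (3 + 2 * c) * (X + G) := final
    _ = (3 + 2 * c) * ∫ x, ((∑ i, ((1/2) * pd V i x * g x + pd g i x) ^ 2) + g x ^ 2) := by
        rw [hRHS]
end

section
/- Let d ≥ 2 and let b = (b_1,…,b_d) : ℝ^d → ℝ^d be such that each b_i is affine in each variable separately, of the form b_i(x) = ∑_{α} C^i_α x^α where the multi-indices α satisfy α_i = 0 and α_j ∈ {0,1} for j ≠ i (so b_i does not depend on x_i). Suppose ∂_i b_j + ∂_j b_i = 0 for all i ≠ j. Then every coefficient C^i_α with 2 ≤ |α| ≤ d−1 vanishes; i.e., each b_i is of the form c_i + ∑_{j ≠ i} A_{ij} x_j with A antisymmetric (A_{ij} = −A_{ji}). -/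
open MeasureTheory Real

lemma pd_poly {d : ℕ} (a : Finset (Fin d) → ℝ) (U : Finset (Fin d)) (j : Fin d)
    (x : Fin d → ℝ) :
    pd (fun x => ∑ S ∈ U.powerset, a S * ∏ k ∈ S, x k) j x
      = ∑ S ∈ U.powerset, a S * (if j ∈ S then ∏ k ∈ S.erase j, x k else 0) := by
  have hprod : ∀ S : Finset (Fin d), HasFDerivAt (fun x : Fin d → ℝ => ∏ k ∈ S, x k)
      (∑ k ∈ S, (∏ l ∈ S.erase k, x l) • (ContinuousLinearMap.proj k : (Fin d → ℝ) →L[ℝ] ℝ)) x := by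
    intro S
    exact HasFDerivAt.finset_prod (fun k _ => (ContinuousLinearMap.proj k :
      (Fin d → ℝ) →L[ℝ] ℝ).hasFDerivAt)
  have h : HasFDerivAt (fun x : Fin d → ℝ => ∑ S ∈ U.powerset, a S * ∏ k ∈ S, x k)
      (∑ S ∈ U.powerset, a S • ∑ k ∈ S, (∏ l ∈ S.erase k, x l) • (ContinuousLinearMap.proj k : (Fin d → ℝ) →L[ℝ] ℝ)) x := by
    exact HasFDerivAt.fun_sum (fun S _ => ((hprod S).const_mul (a S)).congr_fderiv (by ext; simp [smul_smul]))
  rw [pd, h.fderiv]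
  simp only [ContinuousLinearMap.coe_sum', Finset.sum_apply, ContinuousLinearMap.coe_smul',
    Pi.smul_apply, ContinuousLinearMap.proj_apply, Pi.single_apply, smul_eq_mul]
  refine Finset.sum_congr rfl fun S _ => ?_
  rw [Finset.mul_sum]
  by_cases hj : j ∈ S
  · rw [if_pos hj, Finset.sum_eq_single j]
    · simp
    · intro k _ hk; simp; intro h; exact absurd h hk
    · intro h; exact absurd hj h
  · rw [if_neg hj, mul_zero]
    refine Finset.sum_eq_zero fun k hk => ?_
    have : ¬ k = j := fun h => hj (h ▸ hk)
    simp [this]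

lemma indep0 {d : ℕ} (a : Finset (Fin d) → ℝ)
    (h : ∀ W : Finset (Fin d), ∑ T ∈ W.powerset, a T = 0) : ∀ T, a T = 0 := by
  intro T
  induction T using Finset.strongInduction with
  | _ T ih =>
    have hT := h T
    rw [← Finset.add_sum_erase _ _ (Finset.mem_powerset_self T)] at hT
    have hz : ∑ T' ∈ T.powerset.erase T, a T' = 0 := by
      refine Finset.sum_eq_zero fun T' hT' => ?_
      rw [Finset.mem_erase, Finset.mem_powerset] at hT'
      exact ih T' (lt_of_le_of_ne hT'.2 hT'.1)
    linarith

lemma indep {d : ℕ} (a : Finset (Fin d) → ℝ) (U : Finset (Fin d))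
    (h : ∀ x : Fin d → ℝ, ∑ T ∈ U.powerset, a T * ∏ k ∈ T, x k = 0) :
    ∀ T ⊆ U, a T = 0 := by
  set a' : Finset (Fin d) → ℝ := fun T => if T ⊆ U then a T else 0 with ha'
  have key : ∀ W : Finset (Fin d), ∑ T ∈ W.powerset, a' T = 0 := by
    intro W
    have h1 := h (fun k => if k ∈ W then 1 else 0)
    have hprod : ∀ T : Finset (Fin d),
        (∏ k ∈ T, (if k ∈ W then (1:ℝ) else 0)) = if T ⊆ W then 1 else 0 := by
      intro T
      by_cases hTW : T ⊆ W
      · rw [if_pos hTW]; exact Finset.prod_eq_one fun k hk => if_pos (hTW hk)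
      · rw [if_neg hTW]
        obtain ⟨k, hk, hkW⟩ : ∃ k ∈ T, k ∉ W := by
          by_contra hc; push_neg at hc; exact hTW hc
        exact Finset.prod_eq_zero hk (if_neg hkW)
    simp only [hprod] at h1
    calc ∑ T ∈ W.powerset, a' T
        = ∑ T ∈ W.powerset.filter (· ⊆ U), a T := by
          rw [Finset.sum_filter]
      _ = ∑ T ∈ U.powerset.filter (· ⊆ W), a T := by
          apply Finset.sum_congr _ (fun _ _ => rfl)
          ext T
          simp only [Finset.mem_filter, Finset.mem_powerset]
          exact and_comm
      _ = ∑ T ∈ U.powerset, a T * (if T ⊆ W then 1 else 0) := by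
          rw [Finset.sum_filter]
          exact Finset.sum_congr rfl fun T _ => by split <;> simp
      _ = 0 := h1
  intro T hT
  have := indep0 a' key T
  simpa [a', if_pos hT] using this

/-- Algebraic rigidity: if each `b_i(x) = ∑_{S ⊆ {1,…,d}\{i}} C^i_S ∏_{j∈S} x_j`
(affine in each variable separately, independent of `x_i`) and
`∂_i b_j + ∂_j b_i = 0` for all `i ≠ j`, then all coefficients `C^i_S` with
`2 ≤ |S|` vanish; i.e. `b_i(x) = c_i + ∑_j A_{ij} x_j` with `A` antisymmetric. -/
theorem stmt4 {d : ℕ} (hd : 2 ≤ d) (C : Fin d → Finset (Fin d) → ℝ)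
    (b : Fin d → (Fin d → ℝ) → ℝ)
    (hb : ∀ i x, b i x = ∑ S ∈ (Finset.univ.erase i).powerset, C i S * ∏ j ∈ S, x j)
    (hsym : ∀ i j, i ≠ j → ∀ x, pd (b j) i x + pd (b i) j x = 0) :
    (∀ i S, S ⊆ Finset.univ.erase i → 2 ≤ S.card → C i S = 0) ∧
      ∃ (c : Fin d → ℝ) (A : Fin d → Fin d → ℝ), (∀ i j, A i j = - A j i) ∧
        ∀ i x, b i x = c i + ∑ j, A i j * x j := by
  classical
  -- pd of b
  have hpd : ∀ i j x, pd (b i) j x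
      = ∑ S ∈ (Finset.univ.erase i).powerset, C i S *
          (if j ∈ S then ∏ k ∈ S.erase j, x k else 0) := by
    intro i j x
    have : b i = fun x => ∑ S ∈ (Finset.univ.erase i).powerset, C i S * ∏ k ∈ S, x k :=
      funext (hb i)
    rw [this, pd_poly]
  -- reindexed form of pd
  have hpd' : ∀ i j, i ≠ j → ∀ x, pd (b i) j x
      = ∑ T ∈ ((Finset.univ.erase i).erase j).powerset, C i (insert j T) * ∏ k ∈ T, x k := by
    intro i j hij x
    rw [hpd]
    have hji : j ∈ Finset.univ.erase i := Finset.mem_erase.2 ⟨Ne.symm hij, Finset.mem_univ j⟩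
    have hins : Finset.univ.erase i = insert j ((Finset.univ.erase i).erase j) :=
      (Finset.insert_erase hji).symm
    have hjnot : j ∉ (Finset.univ.erase i).erase j := Finset.notMem_erase j _
    have hsum := Finset.sum_powerset_insert hjnot
      (fun S => C i S * (if j ∈ S then ∏ k ∈ S.erase j, x k else 0))
    rw [Finset.insert_erase hji] at hsum
    rw [hsum]
    have h1 : ∑ T ∈ ((Finset.univ.erase i).erase j).powerset,
        C i T * (if j ∈ T then ∏ k ∈ T.erase j, x k else 0) = 0 := by
      refine Finset.sum_eq_zero fun T hT => ?_
      rw [Finset.mem_powerset] at hT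
      have : j ∉ T := fun h => hjnot (hT h)
      simp [this]
    rw [h1, zero_add]
    refine Finset.sum_congr rfl fun T hT => ?_
    rw [Finset.mem_powerset] at hT
    have hjT : j ∉ T := fun h => hjnot (hT h)
    rw [if_pos (Finset.mem_insert_self j T), Finset.erase_insert hjT]
  -- key coefficient relation
  have key : ∀ i j : Fin d, i ≠ j → ∀ T : Finset (Fin d), i ∉ T → j ∉ T →
      C i (insert j T) = - C j (insert i T) := by
    intro i j hij T hiT hjT
    have hx : ∀ x : Fin d → ℝ, ∑ T ∈ ((Finset.univ.erase i).erase j).powerset,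
        (C j (insert i T) + C i (insert j T)) * ∏ k ∈ T, x k = 0 := by
      intro x
      have h1 := hsym i j hij x
      rw [hpd' j i (Ne.symm hij) x, hpd' i j hij x] at h1
      have : (Finset.univ.erase j).erase i = (Finset.univ.erase i).erase j :=
        Finset.erase_right_comm
      rw [this] at h1
      rw [← h1, ← Finset.sum_add_distrib]
      exact Finset.sum_congr rfl fun T _ => by ring
    have hsub : T ⊆ (Finset.univ.erase i).erase j := by
      intro k hk
      exact Finset.mem_erase.2 ⟨fun h => hjT (h ▸ hk),
        Finset.mem_erase.2 ⟨fun h => hiT (h ▸ hk), Finset.mem_univ k⟩⟩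
    have := indep _ _ hx T hsub
    linarith
  -- part 1: vanishing of higher coefficients
  have part1 : ∀ i S, S ⊆ Finset.univ.erase i → 2 ≤ S.card → C i S = 0 := by
    intro i S hS hcard
    have hiS : i ∉ S := fun h => (Finset.mem_erase.1 (hS h)).1 rfl
    obtain ⟨j, hjS, k, hkS, hjk⟩ := Finset.one_lt_card.1 (by omega : 1 < S.card)
    set R := (S.erase j).erase k with hR
    have hkR : k ∉ R := Finset.notMem_erase k _
    have hjR : j ∉ R := fun h => Finset.notMem_erase j S (Finset.mem_of_mem_erase h)
    have hiR : i ∉ R := fun h => hiS (Finset.mem_of_mem_erase (Finset.mem_of_mem_erase h))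
    have hkSj : k ∈ S.erase j := Finset.mem_erase.2 ⟨Ne.symm hjk, hkS⟩
    have hSeq : S = insert j (insert k R) := by
      rw [hR, Finset.insert_erase hkSj, Finset.insert_erase hjS]
    have hij : i ≠ j := fun h => hiS (h ▸ hjS)
    have hik : i ≠ k := fun h => hiS (h ▸ hkS)
    have e1 : C i (insert j (insert k R)) = - C j (insert i (insert k R)) :=
      key i j hij (insert k R) (by simp [hiR, hik]) (by simp [hjR, hjk])
    have e2 : C j (insert k (insert i R)) = - C k (insert j (insert i R)) :=
      key j k hjk (insert i R)
        (by simp [Finset.mem_insert, hij.symm, hjR])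
        (by simp [Finset.mem_insert, hik.symm, hkR])
    have e3 : C k (insert i (insert j R)) = - C i (insert k (insert j R)) :=
      key k i (Ne.symm hik) (insert j R)
        (by simp [Finset.mem_insert, Ne.symm hjk, hkR])
        (by simp [Finset.mem_insert, hij, hiR])
    have c1 : insert i (insert k R) = insert k (insert i R) := Finset.insert_comm _ _ _
    have c2 : insert j (insert i R) = insert i (insert j R) := Finset.insert_comm _ _ _
    have c3 : insert k (insert j R) = insert j (insert k R) := Finset.insert_comm _ _ _
    have : C i S = - C i S := by
      calc C i S = C i (insert j (insert k R)) := by rw [← hSeq]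
        _ = - C j (insert i (insert k R)) := e1
        _ = - C j (insert k (insert i R)) := by rw [c1]
        _ = C k (insert j (insert i R)) := by rw [e2]; ring
        _ = C k (insert i (insert j R)) := by rw [c2]
        _ = - C i (insert k (insert j R)) := e3
        _ = - C i S := by rw [c3, ← hSeq]
    linarith
  refine ⟨part1, fun i => C i ∅, fun i j => if i = j then 0 else C i {j}, ?_, ?_⟩
  · -- antisymmetry
    intro i j
    by_cases h : i = j
    · subst h; simp
    · have h' : ¬ j = i := fun hh => h hh.symm
      simp only [if_neg h, if_neg h']
      have := key i j h ∅ (Finset.notMem_empty i) (Finset.notMem_empty j)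
      simpa using this
  · -- formula for b
    intro i x
    rw [hb]
    have hsplit : ∑ S ∈ (Finset.univ.erase i).powerset, C i S * ∏ j ∈ S, x j
        = ∑ S ∈ (Finset.univ.erase i).powerset.filter (fun S => S.card ≤ 1),
            C i S * ∏ j ∈ S, x j := by
      symm
      refine Finset.sum_subset (Finset.filter_subset _ _) fun S hS hS' => ?_
      have h2 : 2 ≤ S.card := by
        by_contra hc
        exact hS' (Finset.mem_filter.2 ⟨hS, by omega⟩)
      rw [part1 i S (Finset.mem_powerset.1 hS) h2, zero_mul]
    have hset : (Finset.univ.erase i).powerset.filter (fun S => S.card ≤ 1)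
        = insert ∅ ((Finset.univ.erase i).image fun j => ({j} : Finset (Fin d))) := by
      ext S
      simp only [Finset.mem_filter, Finset.mem_powerset, Finset.mem_insert, Finset.mem_image]
      constructor
      · rintro ⟨hsub, hc⟩
        rcases Nat.le_one_iff_eq_zero_or_eq_one.1 hc with h0 | h1
        · exact Or.inl (Finset.card_eq_zero.1 h0)
        · obtain ⟨j, rfl⟩ := Finset.card_eq_one.1 h1
          exact Or.inr ⟨j, hsub (Finset.mem_singleton_self j), rfl⟩
      · rintro (rfl | ⟨j, hj, rfl⟩)
        · simp
        · simp [Finset.singleton_subset_iff, hj]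
    have hempty : (∅ : Finset (Fin d)) ∉
        (Finset.univ.erase i).image fun j => ({j} : Finset (Fin d)) := by
      simp
    rw [hsplit, hset, Finset.sum_insert hempty,
      Finset.sum_image (fun a _ b _ h => Finset.singleton_injective h)]
    simp only [Finset.prod_empty, mul_one, Finset.prod_singleton]
    have hfin : ∑ j, (if i = j then (0:ℝ) else C i {j}) * x j
        = ∑ j ∈ Finset.univ.erase i, C i {j} * x j := by
      rw [← Finset.sum_erase_add _ _ (Finset.mem_univ i)]
      have hii : (if i = i then (0:ℝ) else C i {i}) * x i = 0 := by simp
      rw [hii, add_zero]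
      refine Finset.sum_congr rfl fun j hj => ?_
      have : ¬ i = j := fun h => (Finset.mem_erase.1 hj).1 h.symm
      rw [if_neg this]
    rw [hfin]
end

section
/- Let V : ℝ^d → ℝ be smooth satisfying |∇²V(x)|² ≤ C₀(|∇V(x)|² + 1) for all x. Then there exist constants λ ∈ (0,1) and C such that (1/4)|∇V|² − (1/2)ΔV − ∑_{i,j}|∂_i∂_j V| ≥ λ( (1/4)|∇V|² − (1/2)ΔV ) − C pointwise on ℝ^d. -/
open MeasureTheory Real

lemma key_ineq (G T S K2 : ℝ) (hG : 0 ≤ G) (hS : 0 ≤ S) (hK : 0 ≤ K2)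
    (hT : |T| ≤ S) (hS2 : S ^ 2 ≤ K2 * (G + 1)) :
    (1/4) * G - (1/2) * T - S ≥
      (1/2) * ((1/4) * G - (1/2) * T) - (1/8 + (9/2) * K2) := by
  have h1 : T ≤ S := (abs_le.mp hT).2
  have h12 : 12 * S ≤ (G + 1) + 36 * K2 := by
    have hA : (0:ℝ) ≤ (G + 1) + 36 * K2 := by positivity
    have hsq : (12 * S) ^ 2 ≤ ((G + 1) + 36 * K2) ^ 2 := by
      nlinarith [sq_nonneg (G + 1 - 36 * K2)]
    exact (pow_le_pow_iff_left₀ (by positivity) hA (by norm_num)).mp hsq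
  linarith

/-- If `|∇²V|² ≤ C₀(|∇V|² + 1)`, then there are `λ ∈ (0,1)` and `C` with
`(1/4)|∇V|² − (1/2)ΔV − ∑_{ij}|∂_i∂_j V| ≥ λ((1/4)|∇V|² − (1/2)ΔV) − C`
pointwise on `ℝ^d`. -/
theorem stmt7 {d : ℕ} (V : (Fin d → ℝ) → ℝ) (hV : ContDiff ℝ (⊤ : ℕ∞) V) (C₀ : ℝ)
    (hHess : ∀ x, (∑ i, ∑ j, (pd (pd V j) i x) ^ 2) ≤
        C₀ * ((∑ i, (pd V i x) ^ 2) + 1)) :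
    ∃ lam C : ℝ, 0 < lam ∧ lam < 1 ∧ ∀ x,
      (1 / 4) * (∑ i, (pd V i x) ^ 2) - (1 / 2) * (∑ i, pd (pd V i) i x)
          - (∑ i, ∑ j, |pd (pd V j) i x|) ≥
        lam * ((1 / 4) * (∑ i, (pd V i x) ^ 2)
          - (1 / 2) * (∑ i, pd (pd V i) i x)) - C := by
  have hC₀ : 0 ≤ C₀ := by
    have h := hHess 0
    have h1 : (0:ℝ) ≤ ∑ i, ∑ j, (pd (pd V j) i 0) ^ 2 := by positivity
    have h2 : (0:ℝ) < (∑ i, (pd V i 0) ^ 2) + 1 := by positivity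
    nlinarith
  refine ⟨1/2, 1/8 + (9/2) * ((d:ℝ)^2 * C₀), by norm_num, by norm_num, fun x => ?_⟩
  set G := ∑ i, (pd V i x) ^ 2 with hGdef
  set T := ∑ i, pd (pd V i) i x with hTdef
  set S := ∑ i, ∑ j, |pd (pd V j) i x| with hSdef
  have hG : 0 ≤ G := by positivity
  have hS : 0 ≤ S := by positivity
  have hT : |T| ≤ S := by
    calc |T| ≤ ∑ i, |pd (pd V i) i x| := Finset.abs_sum_le_sum_abs _ _
    _ ≤ S := Finset.sum_le_sum fun i _ =>
        Finset.single_le_sum (f := fun j => |pd (pd V j) i x|)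
          (fun j _ => abs_nonneg _) (Finset.mem_univ i)
  have hS2 : S ^ 2 ≤ (d:ℝ)^2 * C₀ * (G + 1) := by
    have hcs : S ^ 2 ≤ (d:ℝ)^2 * ∑ i, ∑ j, (pd (pd V j) i x) ^ 2 := by
      have : S = ∑ p : Fin d × Fin d, |pd (pd V p.2) p.1 x| := by
        rw [hSdef, Fintype.sum_prod_type]
      rw [this]
      have := sq_sum_le_card_mul_sum_sq (s := (Finset.univ : Finset (Fin d × Fin d)))
        (f := fun p => |pd (pd V p.2) p.1 x|)
      simpa [Fintype.sum_prod_type, sq_abs, Fintype.card_prod, mul_comm, pow_two] using this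
    calc S ^ 2 ≤ (d:ℝ)^2 * ∑ i, ∑ j, (pd (pd V j) i x) ^ 2 := hcs
    _ ≤ (d:ℝ)^2 * (C₀ * (G + 1)) := by
        apply mul_le_mul_of_nonneg_left (hHess x) (by positivity)
    _ = (d:ℝ)^2 * C₀ * (G + 1) := by ring
  exact key_ineq G T S ((d:ℝ)^2 * C₀) hG hS (by positivity) hT hS2
end
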